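/- If U is an ω-cover of X and U = V₁ ∪ V₂, then at least one of V₁, V₂ is an ω-cover of X. -/
import Mathlib


/-- `𝒰` is a collection of subsets of `X` none of which contains `X`. -/
def ProperFamily {X : Type*} (𝒰 : Set (Set X)) : Prop :=
  ∀ U ∈ 𝒰, U ≠ Set.univ

/-- A large cover: every point lies in infinitely many members. -/
def LargeCover {X : Type*} (𝒰 : Set (Set X)) : Prop :=
  ProperFamily 𝒰 ∧ ∀ x : X, {U ∈ 𝒰 | x ∈ U}.Infinite

/-- An ω-cover: every finite subset of `X` lies in some member. -/
def OmegaCover {X : Type*} (𝒰 : Set (Set X)) : Prop :=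
  ProperFamily 𝒰 ∧ ∀ F : Set X, F.Finite → ∃ U ∈ 𝒰, F ⊆ U

/-- A τ-cover: a large cover such that for all `x y`, one of the two
difference-sets of members is finite. -/
def TauCover {X : Type*} (𝒰 : Set (Set X)) : Prop :=
  LargeCover 𝒰 ∧ ∀ x y : X,
    {U ∈ 𝒰 | x ∈ U ∧ y ∉ U}.Finite ∨ {U ∈ 𝒰 | y ∈ U ∧ x ∉ U}.Finite

/-- A γ-cover: an infinite collection such that every point lies in all but
finitely many members. -/
def GammaCover {X : Type*} (𝒰 : Set (Set X)) : Prop :=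
  ProperFamily 𝒰 ∧ 𝒰.Infinite ∧ ∀ x : X, {U ∈ 𝒰 | x ∉ U}.Finite

theorem omegaCover_union_split {X : Type*} (𝒰 𝒱₁ 𝒱₂ : Set (Set X))
    (h : OmegaCover 𝒰) (hun : 𝒰 = 𝒱₁ ∪ 𝒱₂) :
    OmegaCover 𝒱₁ ∨ OmegaCover 𝒱₂ := by
  obtain ⟨hp, hc⟩ := h
  have hp1 : ProperFamily 𝒱₁ := fun U hU => hp U (hun ▸ Or.inl hU)
  have hp2 : ProperFamily 𝒱₂ := fun U hU => hp U (hun ▸ Or.inr hU)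
  by_cases h1 : ∀ F : Set X, F.Finite → ∃ U ∈ 𝒱₁, F ⊆ U
  · exact Or.inl ⟨hp1, h1⟩
  · push_neg at h1
    obtain ⟨F₁, hF₁, hbad⟩ := h1
    refine Or.inr ⟨hp2, fun F hF => ?_⟩
    obtain ⟨U, hU, hsub⟩ := hc (F ∪ F₁) (hF.union hF₁)
    rw [hun] at hU
    rcases hU with hU | hU
    · exact absurd ((Set.union_subset_iff.mp hsub).2) (hbad U hU)
    · exact ⟨U, hU, (Set.union_subset_iff.mp hsub).1⟩
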